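/- arXiv:2410.12935 — 3 statements merged into one kernel-verified Lean document; each statement's English description precedes it below -/
import Mathlib

section
/- The function p(t) = (2/π) ln|coth(π t / 2)| integrates to 1 over the real line: ∫_ℝ p(t) dt = 1. -/
/-- The hyperbolic cotangent. -/
noncomputable def Real.coth (x : ℝ) : ℝ := Real.cosh x / Real.sinh x

/-!
For `u > 0` put `q = exp (-2u) ∈ (0, 1)`. Then `coth u = (1 + q) / (1 - q)`, so
`log coth u = log (1 + q) - log (1 - q) = ∑ₖ 2 q ^ (2k+1) / (2k+1)`. The terms are nonnegative
and integrate over `(0, ∞)` to `1 / (2k+1)²`, whose sum is `π² / 8`. As `log |coth|` is even,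
its integral over `ℝ` is `π² / 4`, and the substitution `u = π t / 2` contributes the factor
`2 / π`, so the total is `(2 / π)² · π² / 4 = 1`.
-/

open MeasureTheory Set Real

theorem hasSum_one_div_odd_sq :
    HasSum (fun k : ℕ => 1 / (2 * (k : ℝ) + 1) ^ 2) (π ^ 2 / 8) := by
  set f : ℕ → ℝ := fun n => 1 / (n : ℝ) ^ 2
  have hf_even : HasSum (fun k => f (2 * k)) (1 / 4 * (π ^ 2 / 6)) := by
    convert hasSum_zeta_two.mul_left (1 / 4) using 1
    · rfl
    · ext k; simp only [f]; push_cast; ring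
  have hf_odd : Summable fun k => f (2 * k + 1) :=
    hasSum_zeta_two.summable.comp_injective fun a b h => by simpa using h
  have htotal := (hf_even.even_add_odd hf_odd.hasSum).unique hasSum_zeta_two
  convert hf_odd.hasSum using 1
  · ext k; simp only [f]; push_cast; ring
  · linarith

namespace Real

theorem coth_neg (x : ℝ) : coth (-x) = -coth x := by
  rw [coth, coth, cosh_neg, sinh_neg, div_neg]

theorem coth_pos {x : ℝ} (hx : 0 < x) : 0 < coth x :=
  div_pos (cosh_pos x) (sinh_pos_iff.mpr hx)

theorem coth_eq_one_add_exp_div_one_sub_exp (x : ℝ) :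
    coth x = (1 + exp (-2 * x)) / (1 - exp (-2 * x)) := by
  have := exp_ne_zero x
  rw [coth, cosh_eq, sinh_eq, show -2 * x = -(x + x) by ring, exp_neg, exp_neg, exp_add]
  field_simp

theorem hasSum_log_coth {x : ℝ} (hx : 0 < x) :
    HasSum (fun k : ℕ => 2 / (2 * k + 1) * exp (-(2 * (2 * k + 1)) * x)) (log (coth x)) := by
  have hq_pos : 0 < exp (-2 * x) := exp_pos _
  have hq_lt : exp (-2 * x) < 1 := exp_lt_one_iff.mpr (by linarith)
  rw [coth_eq_one_add_exp_div_one_sub_exp, log_div (by positivity) (by linarith)]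
  convert hasSum_log_sub_log_of_abs_lt_one (abs_lt.mpr ⟨by linarith, hq_lt⟩) using 2 with k
  rw [← exp_nat_mul]
  push_cast
  ring_nf

end Real

theorem integral_Ioi_log_coth : ∫ x in Ioi 0, log (coth x) = π ^ 2 / 8 := by
  set F : ℕ → ℝ → ℝ := fun k x => 2 / (2 * k + 1) * exp (-(2 * (2 * k + 1)) * x)
  have hrate (k : ℕ) : -(2 * (2 * k + 1) : ℝ) < 0 := by linarith [k.cast_nonneg (α := ℝ)]
  have hF_integral (k : ℕ) : ∫ x in Ioi 0, F k x = 1 / (2 * k + 1) ^ 2 := by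
    rw [integral_const_mul, integral_exp_mul_Ioi (hrate k), mul_zero, exp_zero]
    field_simp
  have hF_int (k : ℕ) : IntegrableOn (F k) (Ioi 0) :=
    (integrableOn_exp_mul_Ioi (hrate k) 0).const_mul _
  have hF_norm (k : ℕ) : ∫ x in Ioi 0, ‖F k x‖ = ∫ x in Ioi 0, F k x := by
    congr 1 with x
    exact norm_of_nonneg (by positivity)
  have hsum := hasSum_integral_of_summable_integral_norm hF_int <| by
    simpa only [hF_norm, hF_integral] using hasSum_one_div_odd_sq.summable
  rw [setIntegral_congr_fun measurableSet_Ioi fun x hx => (hasSum_log_coth hx).tsum_eq.symm]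
  simp only [hF_integral] at hsum
  exact hsum.unique hasSum_one_div_odd_sq

theorem integral_log_abs_coth : ∫ x, log |coth x| = π ^ 2 / 4 := by
  have heven (x : ℝ) : log |coth x| = log |coth (|x|)| := by
    rcases abs_choice x with h | h <;> rw [h]
    rw [coth_neg, abs_neg]
  calc ∫ x, log |coth x| = ∫ x, log |coth (|x|)| := integral_congr_ae (ae_of_all _ heven)
    _ = 2 * ∫ x in Ioi 0, log (coth x) := by
      rw [integral_comp_abs (f := fun x => log |coth x|)]
      congr 1
      exact setIntegral_congr_fun measurableSet_Ioi fun x hx => by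
        rw [abs_of_pos (coth_pos hx)]
    _ = π ^ 2 / 4 := by rw [integral_Ioi_log_coth]; ring

theorem highPeakTent_integral_eq_one :
    ∫ t : ℝ, (2 / Real.pi) * Real.log |Real.coth (Real.pi * t / 2)| = 1 := by
  have hscale (t : ℝ) : π * t / 2 = π / 2 * t := by ring
  simp_rw [hscale]
  rw [integral_const_mul, Measure.integral_comp_mul_left (fun x => log |coth x|),
    integral_log_abs_coth, abs_of_pos (by positivity), smul_eq_mul]
  field_simp
  ring
end

section
/- Duhamel's formula: for a differentiable matrix-valued function A(x) on ℝ, the derivative of the matrix exponential satisfies d/dx e^{A(x)} = ∫₀¹ e^{(1-u)A(x)} (dA(x)/dx) e^{u A(x)} du. -/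
open scoped Matrix.Norms.L2Operator

/-!
`v ↦ exp ((1 - v) • B) * exp (v • C)` has derivative `exp ((1 - v) • B) * (C - B) * exp (v • C)`,
so the fundamental theorem of calculus gives
`exp C - exp B = ∫₀¹ exp ((1 - u) • B) * (C - B) * exp (u • C) du` with no commutativity needed.
Taking `C = B + t • H`, dividing by `t` and letting `t → 0` identifies the Fréchet derivative of
`exp` at `B` (which exists by analyticity) in the direction `H`; the chain rule finishes.
-/

open NormedSpace

section BanachAlgebra

variable {𝔸 : Type*} [NormedRing 𝔸] [NormedAlgebra ℝ 𝔸] [CompleteSpace 𝔸]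

theorem continuous_normedSpace_exp : Continuous (exp : 𝔸 → 𝔸) :=
  continuous_iff_continuousAt.2 fun B => (exp_analytic (𝕂 := ℝ) B).continuousAt

theorem differentiableAt_normedSpace_exp (B : 𝔸) : DifferentiableAt ℝ exp B :=
  (exp_analytic (𝕂 := ℝ) B).differentiableAt

theorem exp_sub_exp_eq_integral (B C : 𝔸) :
    exp C - exp B = ∫ u in (0 : ℝ)..1, exp ((1 - u) • B) * (C - B) * exp (u • C) := by
  have hderiv : ∀ u ∈ Set.uIcc (0 : ℝ) 1,
      HasDerivAt (fun v : ℝ => exp ((1 - v) • B) * exp (v • C))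
        (exp ((1 - u) • B) * (C - B) * exp (u • C)) u := by
    intro u _
    have hB : HasDerivAt (fun v : ℝ => exp ((1 - v) • B)) (-(exp ((1 - u) • B) * B)) u := by
      simpa using (hasDerivAt_exp_smul_const B (1 - u)).comp_const_sub 1 u
    refine (hB.mul (hasDerivAt_exp_smul_const' C u)).congr_deriv ?_
    simp only [mul_sub, sub_mul, neg_mul, mul_assoc]
    abel
  have hcont : Continuous fun u : ℝ => exp ((1 - u) • B) * (C - B) * exp (u • C) := by
    have := continuous_normedSpace_exp (𝔸 := 𝔸)
    fun_prop
  rw [intervalIntegral.integral_eq_sub_of_hasDerivAt hderiv (hcont.intervalIntegrable 0 1)]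
  simp

theorem hasDerivAt_exp_add_smul (B H : 𝔸) :
    HasDerivAt (fun t : ℝ => exp (B + t • H))
      (∫ u in (0 : ℝ)..1, exp ((1 - u) • B) * H * exp (u • B)) 0 := by
  set F : ℝ → 𝔸 := fun t => ∫ u in (0 : ℝ)..1, exp ((1 - u) • B) * H * exp (u • (B + t • H))
  have hF : Continuous F := by
    have := continuous_normedSpace_exp (𝔸 := 𝔸)
    exact intervalIntegral.continuous_parametric_intervalIntegral_of_continuous'
      (by fun_prop) 0 1
  have hslope : ∀ t ≠ 0, F t = slope (fun t : ℝ => exp (B + t • H)) 0 t := by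
    intro t ht
    rw [slope_def_module, zero_smul, add_zero, exp_sub_exp_eq_integral, sub_zero,
      ← intervalIntegral.integral_smul]
    refine intervalIntegral.integral_congr fun u _ => ?_
    simp [ht]
  have hF0 : F 0 = ∫ u in (0 : ℝ)..1, exp ((1 - u) • B) * H * exp (u • B) := by
    simp [F]
  rw [hasDerivAt_iff_tendsto_slope, ← hF0]
  exact (hF.continuousAt.tendsto.mono_left nhdsWithin_le_nhds).congr' <|
    eventually_nhdsWithin_of_forall hslope

theorem fderiv_exp_apply (B H : 𝔸) :
    fderiv ℝ exp B H = ∫ u in (0 : ℝ)..1, exp ((1 - u) • B) * H * exp (u • B) := by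
  have hline : HasDerivAt (fun t : ℝ => B + t • H) H 0 := by
    simpa using ((hasDerivAt_id (0 : ℝ)).smul_const H).const_add B
  have hchain : HasDerivAt (fun t : ℝ => exp (B + t • H)) (fderiv ℝ exp B H) 0 :=
    (differentiableAt_normedSpace_exp B).hasFDerivAt.comp_hasDerivAt_of_eq 0 hline (by simp)
  exact hchain.unique (hasDerivAt_exp_add_smul B H)

theorem HasDerivAt.exp_duhamel {f : ℝ → 𝔸} {f' : 𝔸} {x : ℝ} (hf : HasDerivAt f f' x) :
    HasDerivAt (fun y => NormedSpace.exp (f y))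
      (∫ u in (0 : ℝ)..1,
        NormedSpace.exp ((1 - u) • f x) * f' * NormedSpace.exp (u • f x)) x := by
  rw [← fderiv_exp_apply]
  exact (differentiableAt_normedSpace_exp (f x)).hasFDerivAt.comp_hasDerivAt x hf

end BanachAlgebra

theorem duhamel_formula_general (n : ℕ) (A : ℝ → Matrix (Fin n) (Fin n) ℂ)
    (x : ℝ) (A' : Matrix (Fin n) (Fin n) ℂ)
    (hA' : HasDerivAt A A' x) :
    HasDerivAt (fun y : ℝ => NormedSpace.exp (A y))
      (∫ u in (0:ℝ)..1,
        NormedSpace.exp ((1 - u : ℂ) • A x) * A' * NormedSpace.exp ((u : ℂ) • A x)) x := by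
  simp_rw [← Complex.ofReal_one, ← Complex.ofReal_sub, Complex.coe_smul]
  exact hA'.exp_duhamel

theorem duhamel_formula (n : ℕ) (A : ℝ → Matrix (Fin n) (Fin n) ℂ)
    (hA : Differentiable ℝ A) (x : ℝ) (A' : Matrix (Fin n) (Fin n) ℂ)
    (hA' : HasDerivAt A A' x) :
    HasDerivAt (fun y : ℝ => NormedSpace.exp (A y))
      (∫ u in (0:ℝ)..1,
        NormedSpace.exp ((1 - u : ℂ) • A x) * A' * NormedSpace.exp ((u : ℂ) • A x)) x :=
  duhamel_formula_general n A x A' hA'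
end

section
/- ∫_ℝ |t| · (2/π) ln|coth(π t / 2)| dt ≤ 1; in particular the high-peak-tent density has a finite first absolute moment. -/
/-- The high-peak-tent probability density function. -/
noncomputable def highPeakTent (t : ℝ) : ℝ :=
  (2 / Real.pi) * Real.log |Real.coth (Real.pi * t / 2)|

/-!
For `u > 0`, `log (coth u) ≤ coth u - 1 = exp (-u) / sinh u ≤ exp (-u) / u`. With `u = π |t| / 2`
this gives `|t| p(t) ≤ (4 / π²) exp (-π |t| / 2)`, whose integral over `ℝ` is `16 / π³ < 1`.
-/

open Real MeasureTheory

namespace Real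

theorem abs_coth (x : ℝ) : |coth x| = coth |x| := by
  rw [coth, coth, abs_div, abs_of_pos (cosh_pos x), abs_sinh, cosh_abs]

theorem one_lt_coth {x : ℝ} (hx : 0 < x) : 1 < coth x :=
  (one_lt_div (sinh_pos_iff.mpr hx)).mpr (sinh_lt_cosh x)

theorem log_coth_nonneg {x : ℝ} (hx : 0 ≤ x) : 0 ≤ log (coth x) := by
  rcases hx.eq_or_lt with rfl | hx
  · simp [coth] -- `sinh 0 = 0`, so `coth 0 = 0` and `log 0 = 0`
  · exact log_nonneg (one_lt_coth hx).le

theorem coth_sub_one {x : ℝ} (hx : x ≠ 0) : coth x - 1 = exp (-x) / sinh x := by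
  rw [coth, div_sub_one (sinh_ne_zero.mpr hx), cosh_sub_sinh]

theorem mul_log_coth_le_exp_neg {x : ℝ} (hx : 0 ≤ x) : x * log (coth x) ≤ exp (-x) := by
  rcases hx.eq_or_lt with rfl | hx
  · simp
  have hsinh : 0 < sinh x := sinh_pos_iff.mpr hx
  calc x * log (coth x) ≤ x * (coth x - 1) :=
        mul_le_mul_of_nonneg_left (log_le_sub_one_of_pos (one_pos.trans (one_lt_coth hx))) hx.le
    _ = x / sinh x * exp (-x) := by rw [coth_sub_one hx.ne']; ring
    _ ≤ 1 * exp (-x) := by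
        gcongr
        exact (div_le_one hsinh).mpr (self_lt_sinh_iff.mpr hx).le
    _ = exp (-x) := one_mul _

end Real

theorem integral_exp_neg_mul_abs {b : ℝ} (hb : 0 < b) : ∫ x : ℝ, exp (-b * |x|) = 2 / b := by
  rw [integral_comp_abs (f := fun x => exp (-b * x)), integral_exp_mul_Ioi (neg_lt_zero.mpr hb)]
  field_simp
  simp

theorem integrable_exp_neg_mul_abs {b : ℝ} (hb : 0 < b) : Integrable fun x : ℝ => exp (-b * |x|) :=
  -- a non-integrable function has Bochner integral `0`
  .of_integral_ne_zero (by rw [integral_exp_neg_mul_abs hb]; positivity)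

theorem highPeakTent_eq (t : ℝ) : highPeakTent t = 2 / π * log (coth (π * |t| / 2)) := by
  rw [highPeakTent, abs_coth, abs_div, abs_mul, abs_of_pos pi_pos, abs_two]

theorem highPeakTent_nonneg (t : ℝ) : 0 ≤ highPeakTent t := by
  rw [highPeakTent_eq]
  exact mul_nonneg (by positivity) (log_coth_nonneg (by positivity))

theorem measurable_highPeakTent : Measurable highPeakTent := by
  unfold highPeakTent coth
  fun_prop

theorem abs_mul_highPeakTent_le (t : ℝ) :
    |t| * highPeakTent t ≤ 4 / π ^ 2 * exp (-(π / 2) * |t|) := by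
  calc |t| * highPeakTent t = 4 / π ^ 2 * (π * |t| / 2 * log (coth (π * |t| / 2))) := by
        rw [highPeakTent_eq]
        field_simp
        ring
    _ ≤ 4 / π ^ 2 * exp (-(π * |t| / 2)) := by gcongr; exact mul_log_coth_le_exp_neg (by positivity)
    _ = 4 / π ^ 2 * exp (-(π / 2) * |t|) := by ring_nf

theorem highPeakTent_first_absolute_moment :
    MeasureTheory.Integrable (fun t : ℝ => |t| * highPeakTent t) ∧
    ∫ t : ℝ, |t| * highPeakTent t ≤ 1 := by
  have hb : 0 < π / 2 := half_pos pi_pos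
  have hmajorant := (integrable_exp_neg_mul_abs hb).const_mul (4 / π ^ 2)
  have hmoment : Integrable fun t : ℝ => |t| * highPeakTent t := by
    refine hmajorant.mono' (measurable_abs.mul measurable_highPeakTent).aestronglyMeasurable
      (ae_of_all _ fun t => ?_)
    rw [norm_of_nonneg (mul_nonneg (abs_nonneg t) (highPeakTent_nonneg t))]
    exact abs_mul_highPeakTent_le t
  refine ⟨hmoment, ?_⟩
  calc ∫ t : ℝ, |t| * highPeakTent t ≤ ∫ t : ℝ, 4 / π ^ 2 * exp (-(π / 2) * |t|) :=
        integral_mono hmoment hmajorant abs_mul_highPeakTent_le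
    _ = 16 / π ^ 3 := by
        rw [integral_const_mul, integral_exp_neg_mul_abs hb]
        field_simp
        norm_num
    _ ≤ 1 := by
        rw [div_le_one (by positivity)]
        linarith [pow_le_pow_left₀ (by norm_num) pi_gt_three.le 3]
end
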